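/- arXiv:1912.11399 — 4 statements merged into one kernel-verified Lean document; each statement's English description precedes it below -/
import Mathlib

section
/- Let n ≥ 1 and N = 2n, let λ : Fin N → ℂ, and let W : Fin N → (Fin 2 →₀ ℕ) → ℂ, R : Fin 2 → (Fin 2 →₀ ℕ) → ℂ, G : Fin N → (Fin 2 →₀ ℕ) → ℂ be coefficient families, where W and R satisfy the tangency normalizations. Fix i ∈ Fin N and a multi-index k : Fin 2 →₀ ℕ with k 0 + k 1 ≥ 2. Then the k-th coefficient equation of row i of the autonomous invariance equation, namely λ i · W i k + G i k = ∑_{j ∈ Fin 2} ∑_{(m,n) ∈ antidiagonal (k + e_j), m j > 0} (m j) · (W i m) · (R j n), holds if and only if (λ i − ∑_{j ∈ Fin 2} (k j) · λ j) · W i k = (if i < 2 then R i k else 0) + Q i k, where Q i k := ∑_{j ∈ Fin 2} ∑_{(m,n) ∈ antidiagonal (k + e_j), m j > 0, m ≠ e_j, m ≠ k} (m j) · (W i m) · (R j n) − G i k. -/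
/-!
In the `j`-th sum, the pairs `(m, n)` of the antidiagonal of `k + e_j` with `m = e_j` or `m = k`
are exactly `(e_j, k)` and `(k, e_j)`; these are the only terms that contain a coefficient of
order `k`. By the tangency normalizations they contribute `δᵢⱼ R j k` and `k j λ j W i k`, and
moving them across the equation turns it into the homological form. They are distinct because
`k` has degree at least two.
-/

open Finset

namespace Finset.HasAntidiagonal

variable {A M : Type*} [AddCommMonoid A] [PartialOrder A] [CanonicallyOrderedAdd A] [Sub A]
  [OrderedSub A] [AddLeftReflectLE A] [HasAntidiagonal A] [AddCommMonoid M]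

theorem sum_filter_and_fst_eq [DecidableEq A] (n m : A) (h : m ≤ n) (P : A × A → Prop)
    [DecidablePred P] (f : A × A → M) :
    ∑ x ∈ antidiagonal n with P x ∧ x.1 = m, f x = if P (m, n - m) then f (m, n - m) else 0 := by
  classical
  rw [← filter_filter, filter_comm, filter_fst_eq_antidiagonal n m, if_pos h, sum_filter,
    sum_singleton]

end Finset.HasAntidiagonal

namespace Finsupp

open Finset.HasAntidiagonal

variable {ι : Type*} [DecidableEq ι]

theorem sum_antidiagonal_add_single_filter_pos {M : Type*} [AddCommMonoid M] (k : ι →₀ ℕ)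
    (j : ι) (hk : single j 1 ≠ k) (f : (ι →₀ ℕ) × (ι →₀ ℕ) → M) :
    ∑ p ∈ antidiagonal (k + single j 1) with 0 < p.1 j, f p =
      f (single j 1, k) + (if 0 < k j then f (k, single j 1) else 0) +
        ∑ p ∈ antidiagonal (k + single j 1) with
          0 < p.1 j ∧ p.1 ≠ single j 1 ∧ p.1 ≠ k, f p := by
  set S : Finset ((ι →₀ ℕ) × (ι →₀ ℕ)) := {p ∈ antidiagonal (k + single j 1) | 0 < p.1 j}
  rw [← Finset.sum_filter_add_sum_filter_not S (fun p => p.1 = single j 1),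
    ← Finset.sum_filter_add_sum_filter_not (S.filter fun p => p.1 ≠ single j 1) (fun p => p.1 = k)]
  simp only [S, filter_filter]
  rw [sum_filter_and_fst_eq _ _ le_add_self, sum_filter_and_fst_eq _ _ le_self_add,
    add_tsub_cancel_right, add_tsub_cancel_left, if_pos (by simp), add_assoc]
  congr 2
  · simp [hk.symm]
  · simp [and_assoc]

theorem sum_antidiagonal_add_single_mul {R : Type*} [CommSemiring R] (w r : (ι →₀ ℕ) → R)
    (k : ι →₀ ℕ) (j : ι) (hk : single j 1 ≠ k) :
    ∑ p ∈ antidiagonal (k + single j 1 : ι →₀ ℕ) with 0 < p.1 j, (p.1 j : R) * w p.1 * r p.2 =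
      w (single j 1) * r k + (k j : R) * w k * r (single j 1) +
        ∑ p ∈ antidiagonal (k + single j 1 : ι →₀ ℕ) with
          0 < p.1 j ∧ p.1 ≠ single j 1 ∧ p.1 ≠ k, (p.1 j : R) * w p.1 * r p.2 := by
  rw [sum_antidiagonal_add_single_filter_pos k j hk]
  rcases (k j).eq_zero_or_pos with hkj | hkj <;> simp [hkj]

theorem single_ne_of_two_le (k : Fin 2 →₀ ℕ) (hk : 2 ≤ k 0 + k 1) (j : Fin 2) :
    single j 1 ≠ k := by
  rintro rfl
  fin_cases j <;> simp at hk

end Finsupp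

theorem Fin.sum_ite_val_eq {M : Type*} [AddCommMonoid M] (m i : ℕ) (a : Fin m → M) :
    ∑ j : Fin m, (if i = j then a j else 0) = if h : i < m then a ⟨i, h⟩ else 0 := by
  split_ifs with h
  · simp_rw [show ∀ j : Fin m, i = j ↔ ⟨i, h⟩ = j from fun j => by simp [Fin.ext_iff]]
    exact Fintype.sum_ite_eq _ a
  · exact sum_eq_zero fun j _ => if_neg (by omega)

/-- The `k`-th coefficient equation of row `i` of the autonomous invariance equation for the
SSM parameterization `W` with reduced dynamics `R` and nonlinearity coefficients `G`. -/
theorem autonomous_coefficient_equation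
    (n : ℕ) (hn : 1 ≤ n) (N : ℕ) (hN : N = 2 * n)
    (lam : Fin N → ℂ)
    (W : Fin N → (Fin 2 →₀ ℕ) → ℂ)
    (R : Fin 2 → (Fin 2 →₀ ℕ) → ℂ)
    (G : Fin N → (Fin 2 →₀ ℕ) → ℂ)
    (hW1 : ∀ i (j : Fin 2), W i (Finsupp.single j 1) = if (i : ℕ) = (j : ℕ) then 1 else 0)
    (hR1 : ∀ j l : Fin 2,
      R j (Finsupp.single l 1) = if j = l then lam (Fin.castLE (by omega) j) else 0)
    (i : Fin N) (k : Fin 2 →₀ ℕ) (hk : 2 ≤ k 0 + k 1) :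
    (lam i * W i k + G i k =
      ∑ j : Fin 2,
        ∑ p ∈ (Finset.HasAntidiagonal.antidiagonal (k + Finsupp.single j 1)).filter (fun p : (Fin 2 →₀ ℕ) × (Fin 2 →₀ ℕ) => 0 < p.1 j),
          (p.1 j : ℂ) * W i p.1 * R j p.2)
    ↔
    ((lam i - ∑ j : Fin 2, (k j : ℂ) * lam (Fin.castLE (by omega) j)) * W i k =
      (if h : (i : ℕ) < 2 then R ⟨i, h⟩ k else 0) +
      ((∑ j : Fin 2,
          ∑ p ∈ (Finset.HasAntidiagonal.antidiagonal (k + Finsupp.single j 1)).filter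
              (fun p : (Fin 2 →₀ ℕ) × (Fin 2 →₀ ℕ) => 0 < p.1 j ∧ p.1 ≠ Finsupp.single j 1 ∧ p.1 ≠ k),
            (p.1 j : ℂ) * W i p.1 * R j p.2) - G i k)) := by
  simp only [Finsupp.sum_antidiagonal_add_single_mul _ _ k _ (k.single_ne_of_two_le hk _), hW1,
    hR1, if_true, ite_mul, one_mul, zero_mul, sum_add_distrib, Fin.sum_ite_val_eq,
    mul_right_comm _ (W i k), ← sum_mul]
  constructor <;> intro h <;> linear_combination h
end

section
/- Let M ≥ 1, λ₁ ∈ ℂ, γ : Fin M → ℂ, c₀ ∈ ℂ, c d : Fin M → ℂ, and ε, Ω ∈ ℝ. Define, for ρ ∈ ℝ (indexing i from 1 to M): a(ρ) = Re(λ₁)·ρ + ∑ᵢ Re(γᵢ)·ρ^{2i+1}; b(ρ) = Im(λ₁) + ∑ᵢ Im(γᵢ)·ρ^{2i}; f₁(ρ) = Re(c₀) + ∑ᵢ (Re(cᵢ) + Re(dᵢ))·ρ^{2i}; f₂(ρ) = Im(c₀) + ∑ᵢ (Im(cᵢ) − Im(dᵢ))·ρ^{2i}; g₁(ρ) = Im(c₀)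 + ∑ᵢ (Im(cᵢ) + Im(dᵢ))·ρ^{2i}; g₂(ρ) = Re(c₀) + ∑ᵢ (Re(cᵢ) − Re(dᵢ))·ρ^{2i}. Let ρ, ψ : ℝ → ℝ be differentiable with ρ(t) > 0 for all t, and set s(t) := ρ(t)·exp(𝕚·(ψ(t) + Ω·t)) : ℝ → ℂ. Then for every t ∈ ℝ, s has derivative λ₁·s(t) + ∑ᵢ γᵢ·s(t)^{i+1}·(conj s(t))^{i} + ε·(c₀·exp(𝕚Ωt) + ∑ᵢ (cᵢ·s(t)^{i}·(conj s(t))^{i}·exp(𝕚Ωt) + dᵢ·s(t)^{i+1}·(conj s(t))^{i−1}·exp(−𝕚Ωt))) at t if and only if ρ'(t) = a(ρ(t)) + ε·(f₁(ρ(t))·cos(ψ(t)) + f₂(ρ(t))·sin(ψ(t))) and ψ'(t) = b(ρ(t)) − Ω + (ε/ρ(t))·(g₁(ρ(t))·cos(ψ(t)) − g₂(ρ(t))·sin(ψ(t))). -/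
open Complex

/-- The complex SSM-reduced trajectory `s(t) = ρ(t) e^{i(ψ(t) + Ω t)}` built from the polar
coordinates `(ρ, ψ)` relative to the forcing phase `Ω t`. -/
noncomputable def ssmTraj (Ω : ℝ) (ρ ψ : ℝ → ℝ) : ℝ → ℂ :=
  fun t => (ρ t : ℂ) * Complex.exp (Complex.I * ((ψ t : ℂ) + (Ω : ℂ) * (t : ℂ)))

/-- `a(ρ) = Re(λ₁)ρ + ∑_{i=1}^M Re(γ_i) ρ^{2i+1}` (index `i : Fin M` encodes `i+1`). -/
noncomputable def aFun (M : ℕ) (lam1 : ℂ) (γ : Fin M → ℂ) (ρ : ℝ) : ℝ :=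
  lam1.re * ρ + ∑ i : Fin M, (γ i).re * ρ ^ (2 * ((i : ℕ) + 1) + 1)

/-- `b(ρ) = Im(λ₁) + ∑_{i=1}^M Im(γ_i) ρ^{2i}`. -/
noncomputable def bFun (M : ℕ) (lam1 : ℂ) (γ : Fin M → ℂ) (ρ : ℝ) : ℝ :=
  lam1.im + ∑ i : Fin M, (γ i).im * ρ ^ (2 * ((i : ℕ) + 1))

/-- `f₁(ρ) = Re(c₀) + ∑_{i=1}^M (Re(c_i) + Re(d_i)) ρ^{2i}`. -/
noncomputable def f1Fun (M : ℕ) (c0 : ℂ) (c d : Fin M → ℂ) (ρ : ℝ) : ℝ :=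
  c0.re + ∑ i : Fin M, ((c i).re + (d i).re) * ρ ^ (2 * ((i : ℕ) + 1))

/-- `f₂(ρ) = Im(c₀) + ∑_{i=1}^M (Im(c_i) − Im(d_i)) ρ^{2i}`. -/
noncomputable def f2Fun (M : ℕ) (c0 : ℂ) (c d : Fin M → ℂ) (ρ : ℝ) : ℝ :=
  c0.im + ∑ i : Fin M, ((c i).im - (d i).im) * ρ ^ (2 * ((i : ℕ) + 1))

/-- `g₁(ρ) = Im(c₀) + ∑_{i=1}^M (Im(c_i) + Im(d_i)) ρ^{2i}`. -/
noncomputable def g1Fun (M : ℕ) (c0 : ℂ) (c d : Fin M → ℂ) (ρ : ℝ) : ℝ :=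
  c0.im + ∑ i : Fin M, ((c i).im + (d i).im) * ρ ^ (2 * ((i : ℕ) + 1))

/-- `g₂(ρ) = Re(c₀) + ∑_{i=1}^M (Re(c_i) − Re(d_i)) ρ^{2i}`. -/
noncomputable def g2Fun (M : ℕ) (c0 : ℂ) (c d : Fin M → ℂ) (ρ : ℝ) : ℝ :=
  c0.re + ∑ i : Fin M, ((c i).re - (d i).re) * ρ ^ (2 * ((i : ℕ) + 1))

/-!
Write `s = ρ e^{iθ}` with `θ = ψ + Ωt`. Since `s^(n+m) s̄^n = ρ^(2n) s^m` and
`e^{±iΩt} = e^{±iθ} e^{∓iψ}`, every term of the reduced dynamics is a real polynomial in `ρ` times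
`e^{iθ}` or `e^{iθ} e^{±iψ}`: the right-hand side is `P(ρ, ψ) e^{iθ}` for an explicit `P`.
On the other hand `s' = (ρ' + iρθ') e^{iθ}`, so after cancelling `e^{iθ}` the complex ODE is
`ρ' + iρ(ψ' + Ω) = P(ρ, ψ)`, whose real and imaginary parts are the two polar equations.
-/

open ComplexConjugate

lemma pow_add_mul_conj_pow {z : ℂ} {r : ℝ} (hz : ‖z‖ ^ 2 = r ^ 2) (n m : ℕ) :
    z ^ (n + m) * conj z ^ n = (r : ℂ) ^ (2 * n) * z ^ m := by
  rw [pow_add, mul_right_comm, ← mul_pow, mul_conj', ← ofReal_pow, hz, pow_mul]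
  push_cast
  ring

lemma norm_ofReal_mul_exp_I_mul_sq (r x : ℝ) : ‖(r : ℂ) * exp (I * x)‖ ^ 2 = r ^ 2 := by
  rw [norm_mul, mul_comm I, norm_exp_ofReal_mul_I, mul_one, norm_real, Real.norm_eq_abs, sq_abs]

lemma HasDerivAt.ofReal_mul_exp_I_mul {r θ : ℝ → ℝ} {r' θ' t : ℝ} (hr : HasDerivAt r r' t)
    (hθ : HasDerivAt θ θ' t) :
    HasDerivAt (fun x : ℝ => (r x : ℂ) * cexp (I * θ x)) ((r' + r t * θ' * I : ℂ) * cexp (I * θ t))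
      t :=
  (hr.ofReal_comp.mul (hθ.ofReal_comp.const_mul I).cexp).congr_deriv (by ring)

section ReducedDynamics

variable (M : ℕ) (lam1 : ℂ) (γ : Fin M → ℂ) (c0 : ℂ) (c d : Fin M → ℂ) (ε : ℝ)

noncomputable def reducedField (Ω t : ℝ) (s : ℂ) : ℂ :=
  lam1 * s + ∑ i : Fin M, γ i * s ^ (((i : ℕ) + 1) + 1) * conj s ^ ((i : ℕ) + 1)
    + (ε : ℂ) * (c0 * exp (I * Ω * t)
      + ∑ i : Fin M, (c i * s ^ ((i : ℕ) + 1) * conj s ^ ((i : ℕ) + 1) * exp (I * Ω * t)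
        + d i * s ^ (((i : ℕ) + 1) + 1) * conj s ^ (((i : ℕ) + 1) - 1) * exp (-(I * Ω * t))))

/-- The reduced vector field seen from the frame rotating with the trajectory
(`reducedField_ofReal_mul_exp`). -/
noncomputable def polarField (r ψ : ℝ) : ℂ :=
  lam1 * r + ∑ i : Fin M, γ i * (r : ℂ) ^ (2 * ((i : ℕ) + 1) + 1)
    + (ε : ℂ) * (c0 * exp (-(I * ψ))
      + ∑ i : Fin M, (r : ℂ) ^ (2 * ((i : ℕ) + 1)) * (c i * exp (-(I * ψ)) + d i * exp (I * ψ)))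

lemma reducedField_ofReal_mul_exp (Ω t r ψ : ℝ) :
    reducedField M lam1 γ c0 c d ε Ω t (r * exp (I * ↑(ψ + Ω * t)))
      = polarField M lam1 γ c0 c d ε r ψ * exp (I * ↑(ψ + Ω * t)) := by
  set w := exp (I * ↑(ψ + Ω * t))
  set s : ℂ := r * w
  have hnorm : ‖s‖ ^ 2 = r ^ 2 := norm_ofReal_mul_exp_I_mul_sq r _
  have hforcing : exp (I * Ω * t) = exp (-(I * ψ)) * w := by
    rw [← exp_add]; congr 1; push_cast; ring
  have hforcing_neg : w * exp (-(I * Ω * t)) = exp (I * ψ) := by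
    rw [← exp_add]; congr 1; push_cast; ring
  have hγ : ∑ i : Fin M, γ i * s ^ (((i : ℕ) + 1) + 1) * conj s ^ ((i : ℕ) + 1)
      = (∑ i : Fin M, γ i * (r : ℂ) ^ (2 * ((i : ℕ) + 1) + 1)) * w := by
    rw [Finset.sum_mul]
    refine Finset.sum_congr rfl fun i _ => ?_
    linear_combination γ i * pow_add_mul_conj_pow hnorm ((i : ℕ) + 1) 1
  have hcd : ∑ i : Fin M, (c i * s ^ ((i : ℕ) + 1) * conj s ^ ((i : ℕ) + 1) * exp (I * Ω * t)
        + d i * s ^ (((i : ℕ) + 1) + 1) * conj s ^ (((i : ℕ) + 1) - 1) * exp (-(I * Ω * t)))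
      = (∑ i : Fin M, (r : ℂ) ^ (2 * ((i : ℕ) + 1))
          * (c i * exp (-(I * ψ)) + d i * exp (I * ψ))) * w := by
    rw [Finset.sum_mul]
    refine Finset.sum_congr rfl fun i _ => ?_
    have hc := pow_add_mul_conj_pow hnorm ((i : ℕ) + 1) 0
    rw [pow_zero, mul_one, add_zero] at hc
    rw [Nat.add_sub_cancel, hforcing]
    linear_combination c i * exp (-(I * ψ)) * w * hc
      + d i * exp (-(I * Ω * t)) * pow_add_mul_conj_pow hnorm (i : ℕ) 2
      + d i * r ^ (2 * (i : ℕ)) * r ^ 2 * w * hforcing_neg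
  rw [reducedField, polarField, hγ, hcd, hforcing]
  ring

lemma polarField_eq (r ψ : ℝ) :
    polarField M lam1 γ c0 c d ε r ψ
      = ↑(aFun M lam1 γ r + ε * (f1Fun M c0 c d r * Real.cos ψ + f2Fun M c0 c d r * Real.sin ψ))
        + ↑(r * bFun M lam1 γ r
            + ε * (g1Fun M c0 c d r * Real.cos ψ - g2Fun M c0 c d r * Real.sin ψ)) * I := by
  apply Complex.ext <;>
    simp only [polarField, aFun, bFun, f1Fun, f2Fun, g1Fun, g2Fun, ← ofReal_pow, add_re, add_im,
      mul_re, mul_im, ofReal_re, ofReal_im, I_re, I_im, re_sum, im_sum, exp_re, exp_im, neg_re,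
      neg_im, Real.exp_zero, Real.cos_neg, Real.sin_neg, mul_zero, zero_mul, mul_one, sub_zero,
      add_zero, neg_zero] <;>
    simp only [mul_add, add_mul, mul_sub, sub_mul, mul_neg, Finset.mul_sum, Finset.sum_mul,
      Finset.sum_add_distrib, Finset.sum_sub_distrib, Finset.sum_neg_distrib,
      Finset.sum_const_zero] <;>
    ring_nf

end ReducedDynamics

theorem reduced_dynamics_polar_form_general
    (M : ℕ) (lam1 : ℂ) (γ : Fin M → ℂ) (c0 : ℂ) (c d : Fin M → ℂ)
    (ε Ω : ℝ) (ρ ψ : ℝ → ℝ)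
    (hρ : Differentiable ℝ ρ) (hψ : Differentiable ℝ ψ)
    (hρpos : ∀ t, 0 < ρ t) (t : ℝ) :
    (HasDerivAt (ssmTraj Ω ρ ψ)
      (lam1 * ssmTraj Ω ρ ψ t
        + ∑ i : Fin M, γ i * ssmTraj Ω ρ ψ t ^ (((i : ℕ) + 1) + 1)
            * (starRingEnd ℂ) (ssmTraj Ω ρ ψ t) ^ ((i : ℕ) + 1)
        + (ε : ℂ) * (c0 * Complex.exp (Complex.I * (Ω : ℂ) * (t : ℂ))
            + ∑ i : Fin M,
              (c i * ssmTraj Ω ρ ψ t ^ ((i : ℕ) + 1)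
                  * (starRingEnd ℂ) (ssmTraj Ω ρ ψ t) ^ ((i : ℕ) + 1)
                  * Complex.exp (Complex.I * (Ω : ℂ) * (t : ℂ))
               + d i * ssmTraj Ω ρ ψ t ^ (((i : ℕ) + 1) + 1)
                  * (starRingEnd ℂ) (ssmTraj Ω ρ ψ t) ^ (((i : ℕ) + 1) - 1)
                  * Complex.exp (-(Complex.I * (Ω : ℂ) * (t : ℂ)))))) t)
    ↔
    (deriv ρ t = aFun M lam1 γ (ρ t)
        + ε * (f1Fun M c0 c d (ρ t) * Real.cos (ψ t) + f2Fun M c0 c d (ρ t) * Real.sin (ψ t))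
     ∧ deriv ψ t = (bFun M lam1 γ (ρ t) - Ω)
        + (ε / ρ t) * (g1Fun M c0 c d (ρ t) * Real.cos (ψ t)
            - g2Fun M c0 c d (ρ t) * Real.sin (ψ t))) := by
  have hs : ssmTraj Ω ρ ψ = fun t => (ρ t : ℂ) * exp (I * ↑(ψ t + Ω * t)) := by
    ext t; simp [ssmTraj]
  have hderiv : HasDerivAt (ssmTraj Ω ρ ψ)
      ((deriv ρ t + ρ t * ((deriv ψ t + Ω : ℝ) : ℂ) * I : ℂ) * exp (I * ↑(ψ t + Ω * t))) t := by
    rw [hs]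
    refine HasDerivAt.ofReal_mul_exp_I_mul (θ := fun x => ψ x + Ω * x) (hρ t).hasDerivAt ?_
    exact (HasDerivAt.add (hψ t).hasDerivAt ((hasDerivAt_id' t).const_mul Ω)).congr_deriv (by ring)
  change HasDerivAt _ (reducedField M lam1 γ c0 c d ε Ω t (ssmTraj Ω ρ ψ t)) t ↔ _
  rw [congrFun hs t, reducedField_ofReal_mul_exp]
  refine (⟨fun h => h.unique hderiv, fun h => h ▸ hderiv⟩ : _ ↔ _).trans ?_
  rw [mul_left_inj' (exp_ne_zero _), polarField_eq, eq_comm]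
  simp only [Complex.ext_iff, add_re, add_im, mul_re, mul_im, ofReal_re, ofReal_im, I_re, I_im,
    mul_zero, zero_mul, mul_one, sub_zero, sub_self, add_zero, zero_add]
  have hρ0 := (hρpos t).ne'
  refine and_congr Iff.rfl ⟨fun h => ?_, fun h => ?_⟩
  · field_simp
    linarith
  · rw [h]
    field_simp
    ring

/-- The complex SSM-reduced dynamics in the coordinate `s₁` with forcing phase `φ = Ωt` is
equivalent to its real form in the polar coordinates `(ρ, ψ)`. -/
theorem reduced_dynamics_polar_form
    (M : ℕ) (hM : 1 ≤ M) (lam1 : ℂ) (γ : Fin M → ℂ) (c0 : ℂ) (c d : Fin M → ℂ)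
    (ε Ω : ℝ) (ρ ψ : ℝ → ℝ)
    (hρ : Differentiable ℝ ρ) (hψ : Differentiable ℝ ψ)
    (hρpos : ∀ t, 0 < ρ t) (t : ℝ) :
    (HasDerivAt (ssmTraj Ω ρ ψ)
      (lam1 * ssmTraj Ω ρ ψ t
        + ∑ i : Fin M, γ i * ssmTraj Ω ρ ψ t ^ (((i : ℕ) + 1) + 1)
            * (starRingEnd ℂ) (ssmTraj Ω ρ ψ t) ^ ((i : ℕ) + 1)
        + (ε : ℂ) * (c0 * Complex.exp (Complex.I * (Ω : ℂ) * (t : ℂ))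
            + ∑ i : Fin M,
              (c i * ssmTraj Ω ρ ψ t ^ ((i : ℕ) + 1)
                  * (starRingEnd ℂ) (ssmTraj Ω ρ ψ t) ^ ((i : ℕ) + 1)
                  * Complex.exp (Complex.I * (Ω : ℂ) * (t : ℂ))
               + d i * ssmTraj Ω ρ ψ t ^ (((i : ℕ) + 1) + 1)
                  * (starRingEnd ℂ) (ssmTraj Ω ρ ψ t) ^ (((i : ℕ) + 1) - 1)
                  * Complex.exp (-(Complex.I * (Ω : ℂ) * (t : ℂ)))))) t)
    ↔
    (deriv ρ t = aFun M lam1 γ (ρ t)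
        + ε * (f1Fun M c0 c d (ρ t) * Real.cos (ψ t) + f2Fun M c0 c d (ρ t) * Real.sin (ψ t))
     ∧ deriv ψ t = (bFun M lam1 γ (ρ t) - Ω)
        + (ε / ρ t) * (g1Fun M c0 c d (ρ t) * Real.cos (ψ t)
            - g2Fun M c0 c d (ρ t) * Real.sin (ψ t))) :=
  reduced_dynamics_polar_form_general M lam1 γ c0 c d ε Ω ρ ψ hρ hψ hρpos t
end

section
/- Let f be a multivariate formal power series over ℂ in variables indexed by Fin 2 (or any finite type σ), let a ≥ 1 be a natural number, let k be a nonzero multi-index, and let j be an index with k j > 0. Then (k j) · coeff k (f^a) = a · ∑_{(m,n) ∈ antidiagonal k, m j > 0} (m j) · (coeff m f) · (coeff n (f^{a−1})). -/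
open Finset

/-!
The Euler operator `X j ∂_j` multiplies the coefficient of `s^m` by `m j`. Multiplying the power
rule `∂_j (f^a) = a f^(a-1) ∂_j f` by `X j` and reading off the coefficient of `s^k` gives the
recurrence; terms with `m j = 0` contribute nothing, so the sum may be restricted to `m j > 0`.
-/

namespace MvPowerSeries

theorem coeff_X_mul_pderiv {σ R : Type*} [CommSemiring R] (i : σ) (f : MvPowerSeries σ R)
    (n : σ →₀ ℕ) : coeff n (X i * pderiv R i f) = n i * coeff n f := by
  rw [X, coeff_monomial_mul, one_mul]
  split_ifs with h
  · have hi : 1 ≤ n i := Finsupp.single_le_iff.mp h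
    rw [coeff_pderiv, tsub_add_cancel_of_le h, Finsupp.tsub_apply, Finsupp.single_eq_same,
      mul_comm, ← Nat.cast_add_one, Nat.sub_add_cancel hi]
  · have hi : n i = 0 := by
      by_contra hi
      exact h (Finsupp.single_le_iff.mpr (Nat.one_le_iff_ne_zero.mpr hi))
    rw [hi, Nat.cast_zero, zero_mul]

theorem X_mul_pderiv_pow {σ R : Type*} [CommSemiring R] (i : σ) (f : MvPowerSeries σ R)
    (a : ℕ) : X i * pderiv R i (f ^ a) = C (a : R) * ((X i * pderiv R i f) * f ^ (a - 1)) := by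
  rw [pderiv_pow, map_natCast]
  ring

end MvPowerSeries

theorem coeff_pow_recurrence_general
    (σ : Type*) [DecidableEq σ]
    (f : MvPowerSeries σ ℂ) (a : ℕ)
    (k : σ →₀ ℕ) (j : σ) :
    (k j : ℂ) * MvPowerSeries.coeff k (f ^ a) =
      (a : ℂ) * ∑ p ∈ (Finset.HasAntidiagonal.antidiagonal k).filter
          (fun p : (σ →₀ ℕ) × (σ →₀ ℕ) => 0 < p.1 j),
        (p.1 j : ℂ) * MvPowerSeries.coeff p.1 f * MvPowerSeries.coeff p.2 (f ^ (a - 1)) := by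
  have vanishing : ∀ p ∈ Finset.HasAntidiagonal.antidiagonal k,
      (p.1 j : ℂ) * MvPowerSeries.coeff p.1 f * MvPowerSeries.coeff p.2 (f ^ (a - 1)) ≠ 0 →
        0 < p.1 j := by
    intro p _ hp
    refine Nat.pos_of_ne_zero fun h => hp ?_
    rw [h, Nat.cast_zero, zero_mul, zero_mul]
  rw [sum_filter_of_ne vanishing, ← MvPowerSeries.coeff_X_mul_pderiv,
    MvPowerSeries.X_mul_pderiv_pow, MvPowerSeries.coeff_C_mul, MvPowerSeries.coeff_mul]
  simp only [MvPowerSeries.coeff_X_mul_pderiv]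

/-- Multivariate recurrence relation for the coefficients of powers of a multivariate formal
power series, obtained from the identity `∂_{s_j}(f^a) = a·f^{a−1}·∂_{s_j} f`:
`(k j) · coeff k (f^a) = a · ∑_{(m,n) ∈ antidiagonal k, m j > 0} (m j)·(coeff m f)·(coeff n (f^{a−1}))`. -/
theorem coeff_pow_recurrence
    (σ : Type*) [Fintype σ] [DecidableEq σ]
    (f : MvPowerSeries σ ℂ) (a : ℕ) (ha : 1 ≤ a)
    (k : σ →₀ ℕ) (hk : k ≠ 0) (j : σ) (hj : 0 < k j) :
    (k j : ℂ) * MvPowerSeries.coeff k (f ^ a) =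
      (a : ℂ) * ∑ p ∈ (Finset.HasAntidiagonal.antidiagonal k).filter
          (fun p : (σ →₀ ℕ) × (σ →₀ ℕ) => 0 < p.1 j),
        (p.1 j : ℂ) * MvPowerSeries.coeff p.1 f * MvPowerSeries.coeff p.2 (f ^ (a - 1)) :=
  coeff_pow_recurrence_general σ f a k j
end

section
/- For all ψ, f₁, f₂, g₁, g₂ ∈ ℝ, the curve point s(ψ) := R(ψ)·(f₂·g₂, f₂·g₁) + (f₁·g₁ − f₂·g₂, 0)·cos ψ, where R(ψ) is the matrix with rows (cos ψ, sin ψ) and (−sin ψ, cos ψ), equals A·(cos ψ, sin ψ), where A is the symmetric 2×2 matrix with rows (f₁·g₁, f₂·g₁) and (f₂·g₁, −f₂·g₂). Consequently, as ψ ranges over [0, 2π), s(ψ) traces the image of the unit circle under the linear map A (an ellipse-shaped curve). -/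
open Real

lemma circle_param : {v : Fin 2 → ℝ | v 0 ^ 2 + v 1 ^ 2 = 1}
    = (fun ψ : ℝ => ![Real.cos ψ, Real.sin ψ]) '' Set.Ico 0 (2 * π) := by
  ext v
  constructor
  · intro hv
    simp only [Set.mem_setOf_eq] at hv
    have hx1 : |v 0| ≤ 1 := by nlinarith [sq_nonneg (v 0), sq_nonneg (v 1), sq_abs (v 0)]
    have hx1' : -1 ≤ v 0 := by cases abs_le.mp hx1; linarith
    have hx1'' : v 0 ≤ 1 := by cases abs_le.mp hx1; linarith
    have hsq : Real.sin (Real.arccos (v 0)) ^ 2 = v 1 ^ 2 := by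
      rw [Real.sin_arccos, Real.sq_sqrt (by nlinarith : (0:ℝ) ≤ 1 - v 0 ^ 2)]
      linarith
    rcases le_or_gt 0 (v 1) with hy | hy
    · refine ⟨Real.arccos (v 0), ⟨Real.arccos_nonneg _, ?_⟩, ?_⟩
      · have := Real.arccos_le_pi (v 0)
        have := Real.pi_pos
        linarith
      · have hs : Real.sin (Real.arccos (v 0)) = v 1 := by
          have h1 : 0 ≤ Real.sin (Real.arccos (v 0)) :=
            Real.sin_nonneg_of_nonneg_of_le_pi (Real.arccos_nonneg _) (Real.arccos_le_pi _)
          nlinarith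
        funext i
        fin_cases i <;> simp [Real.cos_arccos hx1' hx1'', hs]
    · refine ⟨2 * π - Real.arccos (v 0), ⟨?_, ?_⟩, ?_⟩
      · have := Real.arccos_le_pi (v 0)
        have := Real.pi_pos
        linarith
      · have : 0 < Real.arccos (v 0) := by
          rcases (Real.arccos_nonneg (v 0)).lt_or_eq with h | h
          · exact h
          · exfalso
            have hc : Real.cos (Real.arccos (v 0)) = v 0 := Real.cos_arccos hx1' hx1''
            rw [← h, Real.cos_zero] at hc
            nlinarith
        linarith
      · have hs : Real.sin (Real.arccos (v 0)) = -v 1 := by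
          have h1 : 0 ≤ Real.sin (Real.arccos (v 0)) :=
            Real.sin_nonneg_of_nonneg_of_le_pi (Real.arccos_nonneg _) (Real.arccos_le_pi _)
          nlinarith
        funext i
        fin_cases i <;>
          simp [Real.cos_sub, Real.sin_sub, Real.cos_arccos hx1' hx1'', hs]
  · rintro ⟨ψ, _, rfl⟩
    have := Real.sin_sq_add_cos_sq ψ
    simp only [Set.mem_setOf_eq, Matrix.cons_val_zero, Matrix.cons_val_one, Matrix.head_cons]
    linarith

/-- The left-hand side of the rewritten zero problem,
`s(ψ) = R(ψ)·(f₂g₂, f₂g₁) + (f₁g₁ − f₂g₂, 0)·cos ψ`, equals `A·(cos ψ, sin ψ)` for the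
symmetric matrix `A = [[f₁g₁, f₂g₁], [f₂g₁, −f₂g₂]]`; consequently, as `ψ` ranges over
`[0, 2π)`, the point `s(ψ)` traces the image of the unit circle under the linear map `A`. -/
theorem zeros_lie_on_ellipse (f₁ f₂ g₁ g₂ : ℝ) :
    (∀ ψ : ℝ,
      (!![Real.cos ψ, Real.sin ψ; -Real.sin ψ, Real.cos ψ]).mulVec ![f₂ * g₂, f₂ * g₁]
          + Real.cos ψ • ![f₁ * g₁ - f₂ * g₂, 0]
        = (!![f₁ * g₁, f₂ * g₁; f₂ * g₁, -(f₂ * g₂)]).mulVec ![Real.cos ψ, Real.sin ψ])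
    ∧
    (fun ψ : ℝ =>
        (!![Real.cos ψ, Real.sin ψ; -Real.sin ψ, Real.cos ψ]).mulVec ![f₂ * g₂, f₂ * g₁]
          + Real.cos ψ • ![f₁ * g₁ - f₂ * g₂, 0]) '' Set.Ico 0 (2 * π)
      = (!![f₁ * g₁, f₂ * g₁; f₂ * g₁, -(f₂ * g₂)]).mulVec ''
          {v : Fin 2 → ℝ | v 0 ^ 2 + v 1 ^ 2 = 1} := by
  have key : ∀ ψ : ℝ,
      (!![Real.cos ψ, Real.sin ψ; -Real.sin ψ, Real.cos ψ]).mulVec ![f₂ * g₂, f₂ * g₁]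
          + Real.cos ψ • ![f₁ * g₁ - f₂ * g₂, 0]
        = (!![f₁ * g₁, f₂ * g₁; f₂ * g₁, -(f₂ * g₂)]).mulVec ![Real.cos ψ, Real.sin ψ] := by
    intro ψ
    funext i
    fin_cases i <;>
      simp [Matrix.mulVec, dotProduct, Fin.sum_univ_two] <;> ring
  refine ⟨key, ?_⟩
  rw [circle_param, ← Set.image_comp]
  exact Set.image_congr fun ψ _ => key ψ
end
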